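/- arXiv:1504.05802 — 2 statements merged into one kernel-verified Lean document; each statement's English description precedes it below -/
import Mathlib

section
/- (Well-definedness of the κ-symmetric power Frobenius: Lemma on [ᾱ_a]_κ.) Let κ₀ ∈ ℤ_p. For every m ≥ 0 define, for each j ≥ 0, D_j := Σ_{l+n=j, 0≤n≤m, l≥0} ι(binom(κ₀-m, l)) · binom(m,n) · A_1^{κ₀-m-l} · A_3^l · A_2^{m-n} · A_4^n ∈ K[[t]] (the w^j-coefficient of the formal expansion of (A_1 + A_3 w)^{κ₀-m}(A_2 + A_4 w)^m). Then for all j, n ≥ 0: ‖ι(κ₀^{⌊m⌋}) · D_j[n]‖ ≤ |κ₀^{⌊j⌋}|_p · p^{-( 2(b'/q)n + εj + m(1/(p-1) - b̃/p) )}. (Consequently the κ-symmetric power Frobenius [ᾱ_a]_κ, defined on the normalized basis by w^{(m)} ↦ κ₀^{⌊m⌋}·(A_1+A_3w)^{κ₀-m}(A_2+A_4w)^m, is a well-defined map S(b',ε) → S(b'/q,ε).) -/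
open scoped Classical

open PowerSeries Finset

/-- Nonarchimedean bound on a finite sum. -/
lemma aux_nonarch_sum {K : Type*} [Field K] (v : AbsoluteValue K ℝ)
    (hv : ∀ x y : K, v (x + y) ≤ max (v x) (v y)) {α : Type*} (s : Finset α)
    (f : α → K) (B : ℝ) (hB : 0 ≤ B) (h : ∀ i ∈ s, v (f i) ≤ B) :
    v (∑ i ∈ s, f i) ≤ B := by
  classical
  induction s using Finset.induction with
  | empty => simpa using hB
  | insert _ _ hx ih =>
    rw [Finset.sum_insert hx]
    exact le_trans (hv _ _) (max_le (h _ (Finset.mem_insert_self _ _))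
      (ih fun i hi => h i (Finset.mem_insert_of_mem hi)))

/-- Coefficient bound for a product of power series. -/
lemma aux_bnd_mul {K : Type*} [Field K] (v : AbsoluteValue K ℝ)
    (hv : ∀ x y : K, v (x + y) ≤ max (v x) (v y)) {P α c d : ℝ} (hP : 0 < P)
    {f g : PowerSeries K}
    (hf : ∀ k : ℕ, v (coeff (R := K) k f) ≤ P ^ (-(α * k) - c))
    (hg : ∀ k : ℕ, v (coeff (R := K) k g) ≤ P ^ (-(α * k) - d)) :
    ∀ n : ℕ, v (coeff (R := K) n (f * g)) ≤ P ^ (-(α * n) - (c + d)) := by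
  intro n
  rw [PowerSeries.coeff_mul]
  apply aux_nonarch_sum v hv _ _ _ (Real.rpow_nonneg hP.le _)
  intro q hq
  rw [Finset.HasAntidiagonal.mem_antidiagonal] at hq
  have hcast : (q.1 : ℝ) + (q.2 : ℝ) = (n : ℝ) := by exact_mod_cast congrArg Nat.cast hq
  rw [map_mul]
  calc v (coeff (R := K) q.1 f) * v (coeff (R := K) q.2 g)
      ≤ P ^ (-(α * q.1) - c) * P ^ (-(α * q.2) - d) :=
        mul_le_mul (hf q.1) (hg q.2) (v.nonneg _) (Real.rpow_nonneg hP.le _)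
    _ = P ^ (-(α * n) - (c + d)) := by
        rw [← Real.rpow_add hP]; congr 1; rw [← hcast]; ring

/-- Coefficient bound for a power of a power series. -/
lemma aux_bnd_pow {K : Type*} [Field K] (v : AbsoluteValue K ℝ)
    (hv : ∀ x y : K, v (x + y) ≤ max (v x) (v y)) {P α c : ℝ} (hP : 0 < P)
    {f : PowerSeries K}
    (hf : ∀ k : ℕ, v (coeff (R := K) k f) ≤ P ^ (-(α * k) - c)) (j : ℕ) :
    ∀ n : ℕ, v (coeff (R := K) n (f ^ j)) ≤ P ^ (-(α * n) - (j : ℝ) * c) := by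
  induction j with
  | zero =>
    intro n
    rw [pow_zero, PowerSeries.coeff_one]
    rcases Nat.eq_zero_or_pos n with hn | hn
    · subst hn
      simp only [if_pos rfl, map_one, Nat.cast_zero]
      norm_num
    · rw [if_neg hn.ne', map_zero]
      exact Real.rpow_nonneg hP.le _
  | succ k ih =>
    intro n
    rw [pow_succ]
    have := aux_bnd_mul v hv hP ih hf n
    convert this using 2
    push_cast; ring

open Finset

lemma aux_descPoch_prod {R : Type*} [CommRing R] (x : R) (l : ℕ) :
    (descPochhammer R l).eval x = ∏ i ∈ Finset.range l, (x - (i : R)) := by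
  induction l with
  | zero => simp
  | succ n ih => rw [descPochhammer_succ_eval, ih, Finset.prod_range_succ]

lemma aux_prod_norm_le {p : ℕ} [Fact p.Prime] (z : ℤ_[p]) (l : ℕ) :
    ‖∏ i ∈ Finset.range l, (z - (i : ℤ_[p]))‖ ≤ ‖((l.factorial : ℕ) : ℤ_[p])‖ := by
  rw [← aux_descPoch_prod, descPochhammer_eval_eq_ascPochhammer]
  exact PadicInt.norm_ascPochhammer_le l _

lemma aux_cast_prod {p : ℕ} [Fact p.Prime] (z : ℤ_[p]) (l : ℕ) :
    ((∏ i ∈ Finset.range l, (z - (i : ℤ_[p])) : ℤ_[p]) : ℚ_[p])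
      = ∏ i ∈ Finset.range l, ((z : ℚ_[p]) - (i : ℚ_[p])) := by
  induction l with
  | zero => simp
  | succ n ih =>
    rw [Finset.prod_range_succ, Finset.prod_range_succ, PadicInt.coe_mul, ih, PadicInt.coe_sub]
    norm_cast

/-- binomial coefficient of a p-adic integer has norm at most 1 -/
lemma aux_binom_norm_le_one {p : ℕ} [Fact p.Prime] (z : ℤ_[p]) (l : ℕ) :
    ‖(∏ i ∈ Finset.range l, ((z : ℚ_[p]) - (i : ℚ_[p]))) / (l.factorial : ℚ_[p])‖ ≤ 1 := by
  have hfac : ((l.factorial : ℕ) : ℚ_[p]) ≠ 0 := Nat.cast_ne_zero.2 l.factorial_ne_zero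
  rw [norm_div, div_le_one (norm_pos_iff.2 hfac), ← aux_cast_prod,
    PadicInt.padic_norm_e_of_padicInt]
  calc ‖∏ i ∈ Finset.range l, (z - (i : ℤ_[p]))‖ ≤ ‖((l.factorial : ℕ) : ℤ_[p])‖ :=
        aux_prod_norm_le z l
    _ = ‖((l.factorial : ℕ) : ℚ_[p])‖ := by
        rw [← PadicInt.padic_norm_e_of_padicInt]; norm_cast

/-- Legendre bound: `‖1/l!‖ ≤ p^(l/(p-1))` in `ℚ_[p]`. -/
lemma aux_fact_inv_norm {p : ℕ} [Fact p.Prime] (l : ℕ) :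
    ‖((l.factorial : ℕ) : ℚ_[p])‖⁻¹ ≤ (p : ℝ) ^ ((l : ℝ) / ((p : ℝ) - 1)) := by
  have hp := (Fact.out : p.Prime)
  have hp1 : (1 : ℝ) < p := by exact_mod_cast hp.one_lt
  have hfac : ((l.factorial : ℕ) : ℚ_[p]) ≠ 0 := Nat.cast_ne_zero.2 l.factorial_ne_zero
  rw [Padic.norm_eq_zpow_neg_valuation hfac, Padic.valuation_natCast, ← zpow_neg, neg_neg]
  rw [show ((p : ℝ) ^ ((padicValNat p l.factorial : ℤ)) )
      = (p : ℝ) ^ (((padicValNat p l.factorial : ℤ) : ℝ)) from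
      (Real.rpow_intCast _ _).symm]
  apply Real.rpow_le_rpow_of_exponent_le hp1.le
  -- (p-1) * padicValNat p l! ≤ l
  have hleg := sub_one_mul_padicValNat_factorial (p := p) l
  have hnat : (p - 1) * padicValNat p l.factorial ≤ l := by
    rw [hleg]; exact Nat.sub_le _ _
  have hp2 : 2 ≤ p := hp.two_le
  have hcast : ((p : ℝ) - 1) * (padicValNat p l.factorial : ℝ) ≤ (l : ℝ) := by
    have : (((p - 1) * padicValNat p l.factorial : ℕ) : ℝ) ≤ (l : ℝ) := by exact_mod_cast hnat
    rwa [Nat.cast_mul, Nat.cast_sub (by omega), Nat.cast_one] at this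
  rw [le_div_iff₀ (by linarith), Int.cast_natCast]
  linarith [hcast]

open PowerSeries Finset

/-- combined kappa-binomial norm bound -/
lemma aux_kappa_binom {p : ℕ} [Fact p.Prime] (κ₀ : ℤ_[p]) (m l j : ℕ) (hj : j ≤ m + l) :
    ‖((∏ i ∈ Finset.range m, (κ₀ - (i : ℤ_[p])) : ℤ_[p]) : ℚ_[p]) *
        ((∏ i ∈ Finset.range l, ((κ₀ : ℚ_[p]) - (m : ℚ_[p]) - (i : ℚ_[p]))) /
          (l.factorial : ℚ_[p]))‖ ≤
      ‖(∏ i ∈ Finset.range j, (κ₀ - (i : ℤ_[p])) : ℤ_[p])‖ *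
        (p : ℝ) ^ ((l : ℝ) / ((p : ℝ) - 1)) := by
  have hz : ∀ i : ℕ, (κ₀ : ℚ_[p]) - (m : ℚ_[p]) - (i : ℚ_[p])
      = (((κ₀ - (m : ℤ_[p]) - (i : ℤ_[p])) : ℤ_[p]) : ℚ_[p]) := by
    intro i; push_cast; ring
  have hprodgen : ∀ L : ℕ, (∏ i ∈ Finset.range L, ((κ₀ : ℚ_[p]) - (m : ℚ_[p]) - (i : ℚ_[p])))
      = ((∏ i ∈ Finset.range L, (κ₀ - (m : ℤ_[p]) - (i : ℤ_[p])) : ℤ_[p]) : ℚ_[p]) := by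
    intro L
    rw [Finset.prod_congr rfl fun i _ => hz i]
    induction L with
    | zero => simp
    | succ k ih =>
      rw [Finset.prod_range_succ, Finset.prod_range_succ, PadicInt.coe_mul, ih]
  have hprod := hprodgen l
  have hbig : (∏ i ∈ Finset.range m, (κ₀ - (i : ℤ_[p]))) *
      (∏ i ∈ Finset.range l, (κ₀ - (m : ℤ_[p]) - (i : ℤ_[p])))
      = ∏ i ∈ Finset.range (m + l), (κ₀ - (i : ℤ_[p])) := by
    rw [Finset.prod_range_add]
    refine congrArg _ (Finset.prod_congr rfl fun i _ => ?_)
    push_cast; ring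
  rw [hprod, mul_div_assoc', ← PadicInt.coe_mul, hbig]
  rw [norm_div, PadicInt.padic_norm_e_of_padicInt]
  -- split the big product at j
  obtain ⟨r, hr⟩ : ∃ r, m + l = j + r := ⟨m + l - j, by omega⟩
  have hsplit : ‖∏ i ∈ Finset.range (m + l), (κ₀ - (i : ℤ_[p]))‖ ≤
      ‖∏ i ∈ Finset.range j, (κ₀ - (i : ℤ_[p]))‖ := by
    rw [hr, Finset.prod_range_add, norm_mul]
    calc ‖∏ i ∈ Finset.range j, (κ₀ - (i : ℤ_[p]))‖ *
          ‖∏ i ∈ Finset.range r, (κ₀ - ((j + i : ℕ) : ℤ_[p]))‖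
        ≤ ‖∏ i ∈ Finset.range j, (κ₀ - (i : ℤ_[p]))‖ * 1 :=
          mul_le_mul_of_nonneg_left (PadicInt.norm_le_one _) (norm_nonneg _)
      _ = _ := mul_one _
  rw [div_eq_mul_inv]
  exact mul_le_mul hsplit (aux_fact_inv_norm l) (by positivity) (norm_nonneg _)

/-- the purely real exponent inequality -/
lemma aux_exponent (p q bt b b' ε nn jj mm N : ℝ)
    (hp5 : (5 : ℝ) ≤ p) (hq1 : (1 : ℝ) ≤ q)
    (hb_u : b ≤ bt - 1 / (p - 1)) (hb' : b' ≤ b) (hε : ε = b - 1 / (p - 1))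
    (hn : 0 ≤ nn) (hN : 0 ≤ N) (hNj : N ≤ jj) :
    (jj - N) / (p - 1) + (-(2 * (bt / q) * nn)
        - (0 + (jj - N) * (bt - 1 / (p - 1)) + (mm - N) * (1 / (p - 1) - bt / p)
          + N * (bt - bt / p)))
      ≤ -(2 * (b' / q) * nn + ε * jj + mm * (1 / (p - 1) - bt / p)) := by
  have hp1 : (0:ℝ) < p - 1 := by linarith
  have h1p : (0:ℝ) ≤ 1 / (p - 1) := by positivity
  have hbb : b' ≤ bt := by linarith
  have h1 : 2 * (b' / q) * nn ≤ 2 * (bt / q) * nn := by gcongr <;> linarith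
  have h2 : 0 ≤ (jj - N) * (bt - 1 / (p - 1) - b) :=
    mul_nonneg (by linarith) (by linarith)
  have h3 : 0 ≤ N * (bt - b) := mul_nonneg hN (by linarith)
  have key : (-(2 * (b' / q) * nn + ε * jj + mm * (1 / (p - 1) - bt / p)))
      - ((jj - N) / (p - 1) + (-(2 * (bt / q) * nn)
        - (0 + (jj - N) * (bt - 1 / (p - 1)) + (mm - N) * (1 / (p - 1) - bt / p)
          + N * (bt - bt / p))))
      = (2 * (bt / q) * nn - 2 * (b' / q) * nn)
        + (jj - N) * (bt - 1 / (p - 1) - b) + N * (bt - b) := by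
    subst hε
    field_simp
    ring
  linarith [h1, h2, h3, key]



/-- (Well-definedness of the κ-symmetric power Frobenius; Lemma 3.5 of
the paper.) Let `p ≥ 5` be prime, `q = p^a`, `b̃ = (p-1)/p`, and let `A₁, A₂, A₃, A₄` be
the matrix entries of the relative Frobenius with their growth conditions (Theorem 2.3).
Let `κ₀ ∈ ℤ_p`. For `m ≥ 0` and `j ≥ 0` let
`D_j = Σ_{l+n=j, 0≤n≤m} ι(binom(κ₀-m, l)) binom(m,n) A₁^{κ₀-m-l} A₃^l A₂^{m-n} A₄^n`
(the `w^j`-coefficient of `(A₁ + A₃ w)^{κ₀-m} (A₂ + A₄ w)^m`). Then for all `j, n`: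
`‖ι(κ₀^{⌊m⌋}) D_j[n]‖ ≤ |κ₀^{⌊j⌋}|_p · p^{-(2(b'/q)n + εj + m(1/(p-1) - b̃/p))}`. -/
theorem statement14
    (p a q : ℕ) (hp : p.Prime) (hp5 : 5 ≤ p) (ha : 1 ≤ a) (hq : q = p ^ a)
    [Fact p.Prime]
    (K : Type*) [Field K] [CharZero K]
    (v : AbsoluteValue K ℝ)
    (hv_nonarch : ∀ x y : K, v (x + y) ≤ max (v x) (v y))
    (ι : ℚ_[p] →+* K) (hι : ∀ x : ℚ_[p], v (ι x) = ‖x‖)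
    (bt b b' ε : ℝ) (hbt : bt = ((p : ℝ) - 1) / (p : ℝ))
    (hb_u : b ≤ bt - 1 / ((p : ℝ) - 1)) (hb_l : 1 / ((p : ℝ) - 1) < b) (hb' : b' ≤ b)
    (hε : ε = b - 1 / ((p : ℝ) - 1))
    -- the matrix entries of the relative Frobenius and their growth conditions
    (A1 A2 A3 A4 : PowerSeries K)
    (hA1c : PowerSeries.coeff (R := K) 0 A1 = 1)
    (hA1 : ∀ n : ℕ, v (PowerSeries.coeff (R := K) n A1) ≤ (p : ℝ) ^ (-(2 * (bt / q) * (n : ℝ))))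
    (hA2 : ∀ n : ℕ, v (PowerSeries.coeff (R := K) n A2) ≤
      (p : ℝ) ^ (-(2 * (bt / q) * (n : ℝ) + 1 / ((p : ℝ) - 1) - bt / p)))
    (hA3 : ∀ n : ℕ, v (PowerSeries.coeff (R := K) n A3) ≤
      (p : ℝ) ^ (-(2 * (bt / q) * (n : ℝ) + bt - 1 / ((p : ℝ) - 1))))
    (hA4 : ∀ n : ℕ, v (PowerSeries.coeff (R := K) n A4) ≤
      (p : ℝ) ^ (-(2 * (bt / q) * (n : ℝ) + bt - bt / p)))
    (κ₀ : ℤ_[p])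
    -- the p-adic binomial coefficient binom(τ, l) = (Π_{i<l} (τ - i)) / l!
    (binomQ : ℚ_[p] → ℕ → ℚ_[p])
    (hbinomQ : ∀ (τ : ℚ_[p]) (l : ℕ),
      binomQ τ l = (∏ i ∈ Finset.range l, (τ - (i : ℚ_[p]))) / (l.factorial : ℚ_[p]))
    -- A₁^τ := Σ_j ι(binom(τ,j)) (A₁ - 1)^j, a t-adically convergent series
    (Apow : ℚ_[p] → PowerSeries K)
    (hApow : ∀ (τ : ℚ_[p]) (n : ℕ), PowerSeries.coeff (R := K) n (Apow τ) =
      ∑ j ∈ Finset.range (n + 1),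
        ι (binomQ τ j) * PowerSeries.coeff (R := K) n ((A1 - 1) ^ j))
    -- D m j: the w^j-coefficient of (A₁ + A₃ w)^{κ₀ - m} (A₂ + A₄ w)^m
    (D : ℕ → ℕ → PowerSeries K)
    (hD : ∀ m j : ℕ, D m j =
      ∑ n ∈ Finset.filter (fun n => n ≤ m) (Finset.range (j + 1)),
        PowerSeries.C (R := K) (ι (binomQ ((κ₀ : ℚ_[p]) - (m : ℚ_[p])) (j - n)) * (m.choose n : K))
          * Apow ((κ₀ : ℚ_[p]) - (m : ℚ_[p]) - ((j - n : ℕ) : ℚ_[p]))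
          * A3 ^ (j - n) * A2 ^ (m - n) * A4 ^ n) :
    ∀ m j n : ℕ,
      v (ι ((∏ i ∈ Finset.range m, (κ₀ - (i : ℤ_[p])) : ℤ_[p]) : ℚ_[p])
          * PowerSeries.coeff (R := K) n (D m j)) ≤
        ‖(∏ i ∈ Finset.range j, (κ₀ - (i : ℤ_[p])) : ℤ_[p])‖ *
          (p : ℝ) ^ (-(2 * (b' / q) * (n : ℝ) + ε * (j : ℝ)
            + (m : ℝ) * (1 / ((p : ℝ) - 1) - bt / p))) := by
  intro m j n
  have hppos : (0 : ℝ) < p := by positivity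
  have hp1 : (1 : ℝ) < p := by exact_mod_cast hp.one_lt
  have hp5R : (5 : ℝ) ≤ p := by exact_mod_cast hp5
  have hq1 : (1 : ℝ) ≤ q := by
    have : 1 ≤ q := hq ▸ Nat.one_le_pow _ _ hp.pos
    exact_mod_cast this
  -- abbreviations for the constants
  set c2 : ℝ := 1 / ((p : ℝ) - 1) - bt / p with hc2
  set c3 : ℝ := bt - 1 / ((p : ℝ) - 1) with hc3
  set c4 : ℝ := bt - bt / p with hc4
  -- normalized coefficient bounds
  have hbnd1 : ∀ k : ℕ, v (PowerSeries.coeff (R := K) k A1) ≤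
      (p : ℝ) ^ (-(2 * (bt / q) * (k : ℝ)) - 0) := by
    intro k; convert hA1 k using 2; ring
  have hbnd2 : ∀ k : ℕ, v (PowerSeries.coeff (R := K) k A2) ≤
      (p : ℝ) ^ (-(2 * (bt / q) * (k : ℝ)) - c2) := by
    intro k; convert hA2 k using 2; rw [hc2]; ring
  have hbnd3 : ∀ k : ℕ, v (PowerSeries.coeff (R := K) k A3) ≤
      (p : ℝ) ^ (-(2 * (bt / q) * (k : ℝ)) - c3) := by
    intro k; convert hA3 k using 2; rw [hc3]; ring
  have hbnd4 : ∀ k : ℕ, v (PowerSeries.coeff (R := K) k A4) ≤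
      (p : ℝ) ^ (-(2 * (bt / q) * (k : ℝ)) - c4) := by
    intro k; convert hA4 k using 2; rw [hc4]; ring
  -- bound for A1 - 1
  have hbnd1m : ∀ k : ℕ, v (PowerSeries.coeff (R := K) k (A1 - 1)) ≤
      (p : ℝ) ^ (-(2 * (bt / q) * (k : ℝ)) - 0) := by
    intro k
    rcases Nat.eq_zero_or_pos k with hk | hk
    · subst hk
      rw [map_sub, PowerSeries.coeff_one, if_pos rfl, hA1c, sub_self, map_zero]
      positivity
    · rw [map_sub, PowerSeries.coeff_one, if_neg hk.ne', sub_zero]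
      exact hbnd1 k
  -- bound for Apow of a p-adic integer
  have hApowB : ∀ (z : ℤ_[p]) (k : ℕ), v (PowerSeries.coeff (R := K) k (Apow ((z : ℤ_[p]) : ℚ_[p]))) ≤
      (p : ℝ) ^ (-(2 * (bt / q) * (k : ℝ)) - 0) := by
    intro z k
    rw [hApow]
    apply aux_nonarch_sum v hv_nonarch _ _ _ (Real.rpow_nonneg hppos.le _)
    intro j' _
    rw [map_mul]
    have hbin : v (ι (binomQ ((z : ℤ_[p]) : ℚ_[p]) j')) ≤ 1 := by
      rw [hι, hbinomQ]
      exact aux_binom_norm_le_one z j'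
    have hcoeff := aux_bnd_pow v hv_nonarch hppos hbnd1m j' k
    calc v (ι (binomQ ((z : ℤ_[p]) : ℚ_[p]) j')) * v (PowerSeries.coeff (R := K) k ((A1 - 1) ^ j'))
        ≤ 1 * ((p : ℝ) ^ (-(2 * (bt / q) * (k : ℝ)) - (j' : ℝ) * 0)) :=
          mul_le_mul hbin hcoeff (v.nonneg _) zero_le_one
      _ = (p : ℝ) ^ (-(2 * (bt / q) * (k : ℝ)) - 0) := by rw [one_mul]; congr 1; ring
  -- expand D and bound the sum term by term
  rw [hD m j, map_sum, Finset.mul_sum]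
  apply aux_nonarch_sum v hv_nonarch _ _ _
    (mul_nonneg (norm_nonneg _) (Real.rpow_nonneg hppos.le _))
  intro n' hn'
  rw [Finset.mem_filter, Finset.mem_range] at hn'
  obtain ⟨hn'j', hn'm⟩ := hn'
  have hn'j : n' ≤ j := Nat.lt_succ_iff.mp hn'j'
  set l : ℕ := j - n' with hldef
  have hlj : (l : ℝ) = (j : ℝ) - (n' : ℝ) := by
    rw [hldef, Nat.cast_sub hn'j]
  have hmn : ((m - n' : ℕ) : ℝ) = (m : ℝ) - (n' : ℝ) := Nat.cast_sub hn'm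
  set z : ℤ_[p] := κ₀ - (m : ℤ_[p]) - (l : ℤ_[p]) with hzdef
  have hτ : (κ₀ : ℚ_[p]) - (m : ℚ_[p]) - ((l : ℕ) : ℚ_[p]) = ((z : ℤ_[p]) : ℚ_[p]) := by
    rw [hzdef]; push_cast; ring
  set cterm : K := ι (binomQ ((κ₀ : ℚ_[p]) - (m : ℚ_[p])) l) * (m.choose n' : K) with hcterm
  set X : PowerSeries K :=
    Apow ((κ₀ : ℚ_[p]) - (m : ℚ_[p]) - ((l : ℕ) : ℚ_[p])) * A3 ^ l * A2 ^ (m - n') * A4 ^ n'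
    with hXdef
  have hre : PowerSeries.C (R := K) cterm
        * Apow ((κ₀ : ℚ_[p]) - (m : ℚ_[p]) - ((l : ℕ) : ℚ_[p]))
        * A3 ^ l * A2 ^ (m - n') * A4 ^ n' = PowerSeries.C (R := K) cterm * X := by
    rw [hXdef]; ring
  rw [hre, PowerSeries.coeff_C_mul]
  have hsplit : ι ((∏ i ∈ Finset.range m, (κ₀ - (i : ℤ_[p])) : ℤ_[p]) : ℚ_[p])
      * (cterm * PowerSeries.coeff (R := K) n X)
      = (ι (((∏ i ∈ Finset.range m, (κ₀ - (i : ℤ_[p])) : ℤ_[p]) : ℚ_[p])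
          * binomQ ((κ₀ : ℚ_[p]) - (m : ℚ_[p])) l))
        * ((m.choose n' : K) * PowerSeries.coeff (R := K) n X) := by
    rw [hcterm, map_mul ι]; ring
  rw [hsplit, v.map_mul, v.map_mul]
  -- norm of the kappa-binomial part
  have hkb : v (ι (((∏ i ∈ Finset.range m, (κ₀ - (i : ℤ_[p])) : ℤ_[p]) : ℚ_[p])
      * binomQ ((κ₀ : ℚ_[p]) - (m : ℚ_[p])) l)) ≤
      ‖(∏ i ∈ Finset.range j, (κ₀ - (i : ℤ_[p])) : ℤ_[p])‖ *
        (p : ℝ) ^ ((l : ℝ) / ((p : ℝ) - 1)) := by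
    rw [hι, hbinomQ]
    exact aux_kappa_binom κ₀ m l j (by omega)
  -- norm of the binomial coefficient
  have hch : v ((m.choose n' : K)) ≤ 1 := by
    have hcast : ((m.choose n' : ℕ) : K) = ι (((m.choose n' : ℕ) : ℤ_[p]) : ℚ_[p]) := by
      rw [show (((m.choose n' : ℕ) : ℤ_[p]) : ℚ_[p]) = ((m.choose n' : ℕ) : ℚ_[p]) by norm_cast]
      exact (map_natCast ι _).symm
    rw [hcast, hι, PadicInt.padic_norm_e_of_padicInt]
    exact PadicInt.norm_le_one _
  -- bound on the coefficient of X
  have hXb : v (PowerSeries.coeff (R := K) n X) ≤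
      (p : ℝ) ^ (-(2 * (bt / q) * (n : ℝ)) - (((0 + (l : ℝ) * c3) + ((m - n' : ℕ) : ℝ) * c2)
        + (n' : ℝ) * c4)) := by
    rw [hXdef]
    have h1 : ∀ k : ℕ, v (PowerSeries.coeff (R := K) k
        (Apow ((κ₀ : ℚ_[p]) - (m : ℚ_[p]) - ((l : ℕ) : ℚ_[p])))) ≤
        (p : ℝ) ^ (-(2 * (bt / q) * (k : ℝ)) - 0) := by
      rw [hτ]; exact hApowB z
    have h2 := aux_bnd_pow v hv_nonarch hppos hbnd3 l
    have h3 := aux_bnd_pow v hv_nonarch hppos hbnd2 (m - n')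
    have h4 := aux_bnd_pow v hv_nonarch hppos hbnd4 n'
    exact aux_bnd_mul v hv_nonarch hppos
      (aux_bnd_mul v hv_nonarch hppos (aux_bnd_mul v hv_nonarch hppos h1 h2) h3) h4 n
  -- exponent inequality
  have hexp : (l : ℝ) / ((p : ℝ) - 1) + ((-(2 * (bt / q) * (n : ℝ))) - (((0 + (l : ℝ) * c3)
        + ((m - n' : ℕ) : ℝ) * c2) + (n' : ℝ) * c4)) ≤
      -(2 * (b' / q) * (n : ℝ) + ε * (j : ℝ) + (m : ℝ) * (1 / ((p : ℝ) - 1) - bt / p)) := by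
    rw [hlj, hmn, hc2, hc3, hc4]
    have := aux_exponent (p : ℝ) (q : ℝ) bt b b' ε (n : ℝ) (j : ℝ) (m : ℝ) (n' : ℝ)
      hp5R hq1 (hb_u.trans_eq hc3) hb' hε (Nat.cast_nonneg n) (Nat.cast_nonneg n')
      (by exact_mod_cast hn'j)
    linarith [this]
  -- combine everything
  have step1 : v (ι (((∏ i ∈ Finset.range m, (κ₀ - (i : ℤ_[p])) : ℤ_[p]) : ℚ_[p])
        * binomQ ((κ₀ : ℚ_[p]) - (m : ℚ_[p])) l))
        * (v ((m.choose n' : K)) * v (PowerSeries.coeff (R := K) n X)) ≤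
      (‖(∏ i ∈ Finset.range j, (κ₀ - (i : ℤ_[p])) : ℤ_[p])‖ *
        (p : ℝ) ^ ((l : ℝ) / ((p : ℝ) - 1))) *
      (1 * ((p : ℝ) ^ ((-(2 * (bt / q) * (n : ℝ))) - (((0 + (l : ℝ) * c3)
        + ((m - n' : ℕ) : ℝ) * c2) + (n' : ℝ) * c4)))) :=
    mul_le_mul hkb (mul_le_mul hch hXb (v.nonneg _) zero_le_one)
      (mul_nonneg (v.nonneg _) (v.nonneg _))
      (mul_nonneg (norm_nonneg _) (Real.rpow_nonneg hppos.le _))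
  refine le_trans step1 ?_
  rw [one_mul, mul_assoc, ← Real.rpow_add hppos]
  exact mul_le_mul_of_nonneg_left
    (Real.rpow_le_rpow_of_exponent_le hp1.le hexp) (norm_nonneg _)
end

section
/- (Estimate for the partial sums γ_l of the defining series of γ.) Let γ ∈ K satisfy ‖γ‖ = p^{-1/(p-1)} and Σ_{i=0}^{∞} γ^{p^i}/p^i = 0 (the series converges since ‖γ^{p^i}/p^i‖ = p^{-(p^i/(p-1) - i)} → 0). Then for every l ≥ 0, the partial sum γ_l := Σ_{i=0}^{l} γ^{p^i}/p^i satisfies ‖γ_l‖ ≤ p^{-( p^{l+1}/(p-1) - (l+1) )}. -/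
/-- (Estimate for the partial sums `γ_l` of the defining series of
`γ`; Section 4 of the paper.) Let `γ ∈ K` satisfy `‖γ‖ = p^{-1/(p-1)}` and
`Σ_{i=0}^∞ γ^{p^i}/p^i = 0` (i.e. the partial sums `γ_l = Σ_{i=0}^{l} γ^{p^i}/p^i`
converge to `0`). Then `‖γ_l‖ ≤ p^{-(p^{l+1}/(p-1) - (l+1))}` for every `l ≥ 0`. -/
theorem statement15
    (p : ℕ) (hp : p.Prime)
    (K : Type*) [Field K] [CharZero K]
    (v : AbsoluteValue K ℝ)
    (hv_nonarch : ∀ x y : K, v (x + y) ≤ max (v x) (v y))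
    (hvp : v (p : K) = ((p : ℝ))⁻¹)
    -- K is complete with respect to v
    (hcomplete : ∀ s : ℕ → K,
      (∀ ε : ℝ, 0 < ε → ∃ N : ℕ, ∀ m ≥ N, ∀ n ≥ N, v (s m - s n) < ε) →
      ∃ L : K, ∀ ε : ℝ, 0 < ε → ∃ N : ℕ, ∀ n ≥ N, v (s n - L) < ε)
    (γ : K) (hγ : v γ = (p : ℝ) ^ (-(1 / ((p : ℝ) - 1))))
    -- γl l is the partial sum Σ_{i=0}^{l} γ^{p^i}/p^i
    (γl : ℕ → K)
    (hγl : ∀ l : ℕ, γl l = ∑ i ∈ Finset.range (l + 1), γ ^ (p ^ i) / (p : K) ^ i)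
    -- the series Σ_{i=0}^∞ γ^{p^i}/p^i converges to 0
    (hsum : ∀ ε : ℝ, 0 < ε → ∃ N : ℕ, ∀ l ≥ N, v (γl l) < ε) :
    ∀ l : ℕ, v (γl l) ≤
      (p : ℝ) ^ (-((p : ℝ) ^ (l + 1) / ((p : ℝ) - 1) - ((l : ℝ) + 1))) := by
  have hq1 : (1 : ℝ) < (p : ℝ) := by exact_mod_cast hp.one_lt
  have hq0 : (0 : ℝ) < (p : ℝ) := by linarith
  have hq1' : (0 : ℝ) < (p : ℝ) - 1 := by linarith
  set q : ℝ := (p : ℝ) with hqdef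
  -- norm of the i-th term
  have hterm : ∀ i : ℕ, v (γ ^ (p ^ i) / (p : K) ^ i)
      = q ^ (-(q ^ i / (q - 1) - (i : ℝ))) := by
    intro i
    rw [map_div₀, map_pow, map_pow, hγ, hvp]
    rw [← Real.rpow_natCast (q ^ (-(1 / (q - 1)))) (p ^ i),
      ← Real.rpow_mul hq0.le, inv_pow, ← Real.rpow_natCast q i,
      ← Real.rpow_neg hq0.le, ← Real.rpow_sub hq0]
    congr 1
    rw [Real.rpow_natCast]
    push_cast
    ring
  -- monotonicity of the exponent
  have hmono : ∀ i j : ℕ, i ≤ j →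
      q ^ i / (q - 1) - (i : ℝ) ≤ q ^ j / (q - 1) - (j : ℝ) := by
    intro i j hij
    induction j with
    | zero => simp_all
    | succ m ih =>
      rcases Nat.lt_or_ge i (m + 1) with h | h
      · have h1 := ih (Nat.lt_succ_iff.mp h)
        have h2 : (1 : ℝ) ≤ q ^ m := one_le_pow₀ hq1.le
        have h3 : q ^ (m + 1) / (q - 1) - q ^ m / (q - 1) = q ^ m := by
          field_simp
          ring
        push_cast
        push_cast at h1
        linarith
      · have : i = m + 1 := le_antisymm hij h
        subst this
        exact le_refl _
  -- bound on differences of partial sums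
  have hdiff : ∀ l m : ℕ, l ≤ m →
      v (γl m - γl l) ≤ q ^ (-(q ^ (l + 1) / (q - 1) - ((l : ℝ) + 1))) := by
    intro l m hlm
    induction m with
    | zero =>
      have : l = 0 := Nat.le_zero.mp hlm
      subst this
      simp only [sub_self, map_zero]
      positivity
    | succ m ih =>
      rcases Nat.lt_or_ge l (m + 1) with h | h
      · have h1 := ih (Nat.lt_succ_iff.mp h)
        have hstep : γl (m + 1) = γl m + γ ^ (p ^ (m + 1)) / (p : K) ^ (m + 1) := by
          rw [hγl, hγl, Finset.sum_range_succ]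
        have h2 : v (γl (m + 1) - γl l)
            = v ((γl m - γl l) + γ ^ (p ^ (m + 1)) / (p : K) ^ (m + 1)) := by
          rw [hstep]; ring_nf
        rw [h2]
        refine le_trans (hv_nonarch _ _) (max_le h1 ?_)
        rw [hterm (m + 1)]
        apply Real.rpow_le_rpow_of_exponent_le hq1.le
        have := hmono (l + 1) (m + 1) (Nat.lt_succ_iff.mp h |> Nat.succ_le_succ)
        push_cast at this ⊢
        linarith
      · have : l = m + 1 := le_antisymm hlm h
        subst this
        simp only [sub_self, map_zero]
        positivity
  intro l
  set t : ℝ := q ^ (-(q ^ (l + 1) / (q - 1) - ((l : ℝ) + 1))) with ht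
  have ht0 : 0 < t := Real.rpow_pos_of_pos hq0 _
  obtain ⟨N, hN⟩ := hsum t ht0
  set m : ℕ := max N l with hm
  have h1 : v (γl m) < t := hN m (le_max_left _ _)
  have h2 : v (γl m - γl l) ≤ t := hdiff l m (le_max_right _ _)
  have h3 : γl l = (γl l - γl m) + γl m := by ring
  calc v (γl l) = v ((γl l - γl m) + γl m) := by rw [← h3]
    _ ≤ max (v (γl l - γl m)) (v (γl m)) := hv_nonarch _ _
    _ ≤ t := max_le (by rw [v.map_sub]; exact h2) h1.le
end
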